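/- arXiv:2402.19030 — 2 statements merged into one kernel-verified Lean document; each statement's English description precedes it below -/
import Mathlib

section
/- The function f_β is nonnegative on ℝ \ {0} and ∫_{−∞}^{∞} f_β(t) dt = 1. -/
open MeasureTheory

/-- `f_β(t) = (2/(βπ))·log((e^{π|t|/β}+1)/(e^{π|t|/β}−1))` (the quantum belief propagation
kernel); the formula is used for `t ≠ 0`. -/
noncomputable def arakiF (β t : ℝ) : ℝ :=
  (2 / (β * Real.pi)) *
    Real.log ((Real.exp (Real.pi * |t| / β) + 1) / (Real.exp (Real.pi * |t| / β) - 1))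

private lemma aux_hasSum_oddsq :
    HasSum (fun k : ℕ => (1:ℝ) / (2*(k:ℝ)+1)^2) (Real.pi^2/8) := by
  have h := hasSum_zeta_two
  have he : HasSum (fun k : ℕ => (1:ℝ)/(((2*k : ℕ)):ℝ)^2) (Real.pi^2/6/4) := by
    have heq : (fun k : ℕ => (1:ℝ)/(((2*k : ℕ)):ℝ)^2)
        = fun k : ℕ => ((1:ℝ)/((k:ℕ):ℝ)^2)/4 := by
      funext k
      rcases Nat.eq_zero_or_pos k with rfl | hk
      · norm_num
      · have hk' : ((k:ℕ):ℝ) ≠ 0 := Nat.cast_ne_zero.mpr hk.ne'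
        push_cast
        field_simp
        ring
    rw [heq]
    exact h.div_const 4
  have hso : Summable (fun k : ℕ => (1:ℝ)/(((2*k+1 : ℕ)):ℝ)^2) :=
    h.summable.comp_injective (i := fun k : ℕ => 2*k+1) (fun a b hab => by dsimp only at hab; omega)
  have ho := hso.hasSum
  have htot := HasSum.even_add_odd (f := fun n : ℕ => (1:ℝ)/((n:ℕ):ℝ)^2) he ho
  have huniq := h.unique htot
  have hval : (∑' k : ℕ, (1:ℝ)/(((2*k+1 : ℕ)):ℝ)^2) = Real.pi^2/8 := by linarith
  rw [hval] at ho
  have heq2 : (fun k : ℕ => (1:ℝ)/(((2*k+1 : ℕ)):ℝ)^2)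
      = fun k : ℕ => (1:ℝ)/(2*(k:ℝ)+1)^2 := by
    funext k; push_cast; ring_nf
  rwa [heq2] at ho

private lemma aux_hasSum_logcoth {x : ℝ} (hx : 0 < x) :
    HasSum (fun k : ℕ => 2 / (2*(k:ℝ)+1) * Real.exp (-((2*(k:ℝ)+1) * x)))
      (Real.log ((Real.exp x + 1) / (Real.exp x - 1))) := by
  set y := Real.exp (-x) with hy
  have hy0 : 0 < y := Real.exp_pos _
  have hy1 : y < 1 := by
    rw [hy, Real.exp_lt_one_iff]; linarith
  have h := Real.hasSum_log_sub_log_of_abs_lt_one (x := y)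
    (by rw [abs_of_pos hy0]; exact hy1)
  have hex1 : 1 < Real.exp x := by rw [← Real.exp_zero]; exact Real.exp_lt_exp.mpr hx
  have hyx : y * Real.exp x = 1 := by rw [hy, ← Real.exp_add]; simp
  have hlog : Real.log (1+y) - Real.log (1-y)
      = Real.log ((Real.exp x + 1)/(Real.exp x - 1)) := by
    rw [← Real.log_div (by positivity) (by linarith)]
    congr 1
    have h1 : (0:ℝ) < Real.exp x - 1 := by linarith
    rw [div_eq_div_iff (by linarith) (by linarith)]
    linear_combination 2 * hyx
  rw [← hlog]
  refine HasSum.congr_fun h fun k => ?_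
  have hpow : y ^ (2*k+1) = Real.exp (-((2*(k:ℝ)+1) * x)) := by
    rw [hy, ← Real.exp_nat_mul]
    congr 1
    push_cast
    ring
  rw [hpow]
  ring

private lemma aux_integral_logcoth :
    ∫ x in Set.Ioi (0:ℝ), Real.log ((Real.exp x + 1)/(Real.exp x - 1))
      = Real.pi^2/4 := by
  set F : ℕ → ℝ → ℝ := fun k x => 2 / (2*(k:ℝ)+1) * Real.exp (-((2*(k:ℝ)+1) * x)) with hF
  have hb : ∀ k : ℕ, (0:ℝ) < 2*(k:ℝ)+1 := fun k => by positivity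
  have hFint : ∀ k, IntegrableOn (F k) (Set.Ioi (0:ℝ)) := by
    intro k
    have h0 : IntegrableOn (fun x : ℝ => 2 / (2*(k:ℝ)+1) * Real.exp (-(2*(k:ℝ)+1) * x))
        (Set.Ioi (0:ℝ)) :=
      (exp_neg_integrableOn_Ioi 0 (hb k)).const_mul (2 / (2*(k:ℝ)+1))
    refine h0.congr_fun (fun x _ => ?_) measurableSet_Ioi
    simp only [hF, neg_mul]
  have hnn : ∀ k x, 0 ≤ F k x := fun k x => by
    have := hb k; positivity
  have hFval : ∀ k, (∫ x in Set.Ioi (0:ℝ), F k x) = 2/(2*(k:ℝ)+1)^2 := by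
    intro k
    have hcomp := integral_comp_mul_left_Ioi (fun u => Real.exp (-u)) 0 (hb k)
    simp only [mul_zero, integral_exp_neg_Ioi_zero, smul_eq_mul, mul_one] at hcomp
    rw [hF]
    simp only
    rw [MeasureTheory.integral_const_mul, hcomp]
    have := (hb k).ne'
    field_simp
  have hmeas : ∀ k, AEStronglyMeasurable (F k) (volume.restrict (Set.Ioi (0:ℝ))) := by
    intro k
    exact ((continuous_const.mul ((Real.continuous_exp.comp
      ((continuous_const.mul continuous_id).neg))))).aestronglyMeasurable
  have hsum2 : HasSum (fun k : ℕ => 2/(2*(k:ℝ)+1)^2) (Real.pi^2/4) := by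
    have := aux_hasSum_oddsq.mul_left 2
    have heq : (fun k : ℕ => 2 * ((1:ℝ)/(2*(k:ℝ)+1)^2)) = fun k : ℕ => 2/(2*(k:ℝ)+1)^2 := by
      funext k; ring
    rw [heq] at this
    convert this using 1
    · rfl
    ring
  have hlint : ∀ k, (∫⁻ x in Set.Ioi (0:ℝ), ‖F k x‖₊)
      = ENNReal.ofReal (2/(2*(k:ℝ)+1)^2) := by
    intro k
    have : (∫⁻ x in Set.Ioi (0:ℝ), ‖F k x‖₊)
        = ∫⁻ x in Set.Ioi (0:ℝ), ENNReal.ofReal (F k x) := by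
      apply lintegral_congr
      intro x
      exact Real.enorm_eq_ofReal (hnn k x)
    rw [this, ← ofReal_integral_eq_lintegral_ofReal (hFint k)
      (Filter.Eventually.of_forall (hnn k)), hFval k]
  have hne : (∑' k : ℕ, ∫⁻ x in Set.Ioi (0:ℝ), ‖F k x‖₊) ≠ ⊤ := by
    simp_rw [hlint]
    rw [← ENNReal.ofReal_tsum_of_nonneg (fun k => by have := hb k; positivity)
      hsum2.summable]
    exact ENNReal.ofReal_ne_top
  have key := integral_tsum (μ := volume.restrict (Set.Ioi (0:ℝ))) hmeas hne
  have hcong : (∫ x in Set.Ioi (0:ℝ), Real.log ((Real.exp x + 1)/(Real.exp x - 1)))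
      = ∫ x in Set.Ioi (0:ℝ), ∑' k, F k x := by
    refine setIntegral_congr_fun measurableSet_Ioi fun x hx => ?_
    exact ((aux_hasSum_logcoth hx).tsum_eq).symm
  rw [hcong, key]
  simp_rw [hFval]
  exact hsum2.tsum_eq

/-- `f_β` is nonnegative on `ℝ \ {0}` and `∫_{-∞}^{∞} f_β(t) dt = 1`. -/
theorem stmt7 (β : ℝ) (hβ : 0 < β) :
    (∀ t : ℝ, t ≠ 0 → 0 ≤ arakiF β t) ∧ (∫ t : ℝ, arakiF β t) = 1 := by
  have hπ := Real.pi_pos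
  constructor
  · intro t ht
    have habs : 0 < |t| := abs_pos.mpr ht
    have h1 : 1 < Real.exp (Real.pi * |t| / β) := by
      rw [← Real.exp_zero]
      exact Real.exp_lt_exp.mpr (by positivity)
    have h2 : 1 ≤ (Real.exp (Real.pi * |t| / β) + 1) / (Real.exp (Real.pi * |t| / β) - 1) := by
      rw [le_div_iff₀ (by linarith)]
      linarith
    exact mul_nonneg (by positivity) (Real.log_nonneg h2)
  · have h1 : (∫ t : ℝ, arakiF β t) = ∫ t : ℝ, arakiF β |t| := by
      congr 1; funext t; simp [arakiF, abs_abs]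
    rw [h1, integral_comp_abs (f := arakiF β)]
    have h2 : (∫ t in Set.Ioi (0:ℝ), arakiF β t)
        = ∫ t in Set.Ioi (0:ℝ), (2/(β*Real.pi)) *
            (fun u => Real.log ((Real.exp u + 1)/(Real.exp u - 1))) ((Real.pi/β) * t) := by
      refine setIntegral_congr_fun measurableSet_Ioi fun t ht => ?_
      have ht' : (0:ℝ) < t := ht
      simp only [arakiF, abs_of_pos ht']
      congr 3 <;> ring
    rw [h2, MeasureTheory.integral_const_mul,
      integral_comp_mul_left_Ioi (fun u => Real.log ((Real.exp u + 1)/(Real.exp u - 1))) 0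
        (by positivity : (0:ℝ) < Real.pi/β)]
    simp only [mul_zero, smul_eq_mul]
    rw [aux_integral_logcoth]
    field_simp
    ring
end

section
/- For every real a > 0, ∫_{a}^{∞} f_β(t) dt ≤ 4/(π²·(e^{πa/β} − 1)). -/
open MeasureTheory

lemma aux_key (β E : ℝ) (hβ : 0 < β) (hE : 1 < E) :
    (4 / (β * Real.pi)) * (1 / (1 - E⁻¹)) * (E⁻¹ / (Real.pi / β)) =
      4 / (Real.pi ^ 2 * (E - 1)) := by
  have hπ := Real.pi_pos
  have hE0 : (0:ℝ) < E := by linarith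
  have h1 : 1 - E⁻¹ = (E - 1) / E := by field_simp
  rw [h1]
  have hE1 : E - 1 ≠ 0 := by intro h; rw [sub_eq_zero] at h; exact (lt_irrefl E (h ▸ hE))
  field_simp

lemma aux_integral_exp (c a : ℝ) (hc : 0 < c) :
    (∫ x in Set.Ioi a, Real.exp (-(c * x))) = Real.exp (-(c * a)) / c := by
  have := MeasureTheory.integral_comp_mul_left_Ioi (fun x => Real.exp (-x)) a hc
  simp only [smul_eq_mul] at this
  rw [this, integral_exp_neg_Ioi, div_eq_mul_inv, mul_comm]

/-- for every `a > 0`, `∫_a^∞ f_β(t) dt ≤ 4/(π²(e^{πa/β} − 1))`. -/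
theorem stmt9 (β : ℝ) (hβ : 0 < β) (a : ℝ) (ha : 0 < a) :
    (∫ t in Set.Ioi a, arakiF β t) ≤ 4 / (Real.pi ^ 2 * (Real.exp (Real.pi * a / β) - 1)) := by
  have hπ := Real.pi_pos
  set c := Real.pi / β with hc
  have hc0 : 0 < c := div_pos hπ hβ
  have hca : 0 < c * a := mul_pos hc0 ha
  have hEa : 1 < Real.exp (c * a) := by
    rw [show (1:ℝ) = Real.exp 0 by simp]
    exact Real.exp_lt_exp.2 hca
  set C : ℝ := (4 / (β * Real.pi)) * (1 / (1 - Real.exp (-(c * a)))) with hC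
  have hden : 0 < 1 - Real.exp (-(c * a)) := by
    have : Real.exp (-(c*a)) < 1 := Real.exp_lt_one_iff.2 (by linarith)
    linarith
  have hC0 : 0 ≤ C := by positivity
  -- pointwise bound
  have hbound : ∀ t ∈ Set.Ioi a, arakiF β t ≤ C * Real.exp (-(c * t)) := by
    intro t ht
    simp only [Set.mem_Ioi] at ht
    have ht0 : 0 < t := lt_trans ha ht
    have habs : |t| = t := abs_of_pos ht0
    have hx : Real.pi * |t| / β = c * t := by rw [habs, hc]; ring
    have hEt : 1 < Real.exp (c * t) := by
      rw [show (1:ℝ) = Real.exp 0 by simp]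
      exact Real.exp_lt_exp.2 (mul_pos hc0 ht0)
    set x := Real.exp (c * t) with hxdef
    have hx1 : 0 < x - 1 := by linarith
    unfold arakiF
    rw [hx, ← hxdef]
    have hx0 : x ≠ 0 := by positivity
    have hx1' : x - 1 ≠ 0 := hx1.ne'
    have hlog : Real.log ((x + 1) / (x - 1)) ≤ 2 / (x - 1) := by
      have h1 : (x + 1) / (x - 1) = 1 + 2 / (x - 1) := by
        field_simp
        ring
      rw [h1]
      have := Real.log_le_sub_one_of_pos (x := 1 + 2/(x-1)) (by positivity)
      linarith
    have hstep : 2 / (x - 1) ≤ 2 * Real.exp (-(c * t)) / (1 - Real.exp (-(c * a))) := by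
      have hrw : 2 / (x - 1) = 2 * Real.exp (-(c * t)) / (1 - Real.exp (-(c * t))) := by
        rw [Real.exp_neg, ← hxdef]
        rw [show (1 : ℝ) - x⁻¹ = (x - 1) / x by field_simp]
        field_simp
      rw [hrw]
      apply div_le_div_of_nonneg_left (by positivity) hden
      have : Real.exp (-(c * t)) ≤ Real.exp (-(c * a)) := by
        apply Real.exp_le_exp.2
        have := mul_le_mul_of_nonneg_left ht.le hc0.le
        linarith
      linarith
    have hcoef : 0 ≤ 2 / (β * Real.pi) := by positivity
    calc (2 / (β * Real.pi)) * Real.log ((x + 1) / (x - 1))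
        ≤ (2 / (β * Real.pi)) * (2 * Real.exp (-(c * t)) / (1 - Real.exp (-(c * a)))) :=
          mul_le_mul_of_nonneg_left (le_trans hlog hstep) hcoef
      _ = C * Real.exp (-(c * t)) := by rw [hC]; ring
  have hnonneg : ∀ t ∈ Set.Ioi a, 0 ≤ arakiF β t := by
    intro t ht
    simp only [Set.mem_Ioi] at ht
    have ht0 : 0 < t := lt_trans ha ht
    unfold arakiF
    have hE : 1 < Real.exp (Real.pi * |t| / β) := by
      rw [show (1:ℝ) = Real.exp 0 by simp]
      apply Real.exp_lt_exp.2
      have : 0 < |t| := abs_pos.2 ht0.ne'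
      positivity
    apply mul_nonneg (by positivity)
    apply Real.log_nonneg
    rw [le_div_iff₀ (by linarith)]
    linarith
  -- integrability of majorant
  have hint : IntegrableOn (fun t => C * Real.exp (-(c * t))) (Set.Ioi a) := by
    apply Integrable.const_mul
    simpa only [neg_mul, IntegrableOn] using exp_neg_integrableOn_Ioi a hc0
  have hmain : (∫ t in Set.Ioi a, arakiF β t) ≤ ∫ t in Set.Ioi a, C * Real.exp (-(c * t)) := by
    apply integral_mono_of_nonneg
    · filter_upwards [ae_restrict_mem measurableSet_Ioi] with t ht using hnonneg t ht
    · exact hint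
    · filter_upwards [ae_restrict_mem measurableSet_Ioi] with t ht using hbound t ht
  refine hmain.trans ?_
  rw [integral_const_mul, aux_integral_exp c a hc0]
  have hpe : Real.pi * a / β = c * a := by rw [hc]; ring
  rw [hpe]
  have key : C * (Real.exp (-(c * a)) / c) = 4 / (Real.pi ^ 2 * (Real.exp (c * a) - 1)) := by
    rw [hC, hc, Real.exp_neg]
    exact aux_key β (Real.exp (c * a)) hβ hEa
  rw [key]
end
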